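/- Let A be a right-symmetric algebra over a commutative ring K with multiplication μ₀(a,b) = a∘b, and let μ₁,…,μ_{k−1} : A × A → A be bilinear maps satisfying the deformation equations: d_rsym μ₁ = 0, and Σ_{i=1}^{l−1} μ_i ⋆ μ_{l−i} = −d_rsym μ_l for each l with 2 ≤ l ≤ k−1, where (ψ⋆φ)(a,b,c) = ψ(a,φ(b,c)) − ψ(φ(a,b),c) − ψ(a,φ(c,b)) + ψ(φ(a,c),b). Then the obstruction Obs_k = Σ_{l=1}^{k−1} μ_l ⋆ μ_{k−l} is a right-symmetric 3-cocycle: d_rsym(Obs_k) = 0. -/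

import Mathlib

/-! Let `M_t = Σ_{p<k} tᵖ μ_p` act on `A[[t]]`, with `μ₀` the multiplication and the terms from
`t^k` on set to zero. For every bilinear `M`, `d_M (M ⋆ M) = 0` is a formal identity. The
deformation equations say that the coefficients of `t⁰, …, t^{k-1}` of `M_t ⋆ M_t` vanish on
constants, and its `t^k`-coefficient is `Obs_k`. Since `M_t ⋆ M_t` is `t`-trilinear, it agrees with
`t^k Obs_k(x₀, y₀, z₀)` modulo `t^{k+1}` on all series, so the `t^k`-coefficient of
`d_{M_t}(M_t ⋆ M_t)` at constant arguments is `d_rsym Obs_k`. -/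

open Finset

variable {K A : Type*} [CommRing K] [AddCommGroup A] [Module K A]

/-- The Gerstenhaber-type product for deformations of right-symmetric algebras:
`(ψ⋆φ)(a,b,c) = ψ(a,φ(b,c)) − ψ(φ(a,b),c) − ψ(a,φ(c,b)) + ψ(φ(a,c),b)`. -/
def rstar (ψ φ : A →ₗ[K] A →ₗ[K] A) (a b c : A) : A :=
  ψ a (φ b c) - ψ (φ a b) c - ψ a (φ c b) + ψ (φ a c) b

/-- The right-symmetric coboundary of a 2-cochain with regular coefficients. -/
def drsym2 (mul : A →ₗ[K] A →ₗ[K] A) (ψ : A → A → A) (a b c : A) : A :=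
  mul a (ψ b c) - mul a (ψ c b) - ψ (mul a b) c + ψ (mul a c) b
    + ψ a (mul b c - mul c b) - mul (ψ a b) c + mul (ψ a c) b

/-- The right-symmetric coboundary of a 3-cochain (alternating in its last two
arguments) with regular coefficients. -/
def drsym3 (mul : A →ₗ[K] A →ₗ[K] A) (χ : A → A → A → A) (a₀ a₁ a₂ a₃ : A) : A :=
  mul a₀ (χ a₁ a₂ a₃) - χ (mul a₀ a₁) a₂ a₃ + mul (χ a₀ a₂ a₃) a₁
    - mul a₀ (χ a₂ a₁ a₃) + χ (mul a₀ a₂) a₁ a₃ - mul (χ a₀ a₁ a₃) a₂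
    + mul a₀ (χ a₃ a₁ a₂) - χ (mul a₀ a₃) a₁ a₂ + mul (χ a₀ a₁ a₂) a₃
    + χ a₀ (mul a₁ a₂ - mul a₂ a₁) a₃
    + χ a₀ a₂ (mul a₁ a₃ - mul a₃ a₁)
    - χ a₀ a₁ (mul a₂ a₃ - mul a₃ a₂)

section rstar

variable (ψ φ : A →ₗ[K] A →ₗ[K] A)

lemma rstar_add_left (a a' b c : A) :
    rstar ψ φ (a + a') b c = rstar ψ φ a b c + rstar ψ φ a' b c := by
  simp only [rstar, map_add, LinearMap.add_apply]; abel

lemma rstar_add_mid (a b b' c : A) :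
    rstar ψ φ a (b + b') c = rstar ψ φ a b c + rstar ψ φ a b' c := by
  simp only [rstar, map_add, LinearMap.add_apply]; abel

lemma rstar_add_right (a b c c' : A) :
    rstar ψ φ a b (c + c') = rstar ψ φ a b c + rstar ψ φ a b c' := by
  simp only [rstar, map_add, LinearMap.add_apply]; abel

lemma rstar_add_rstar_eq_drsym2 (a b c : A) :
    rstar ψ φ a b c + rstar φ ψ a b c = drsym2 ψ (fun x y => φ x y) a b c := by
  simp only [drsym2, rstar, map_sub]; abel

lemma rstar_self_eq_zero
    (hrs : ∀ a b c : A, ψ (ψ a b) c - ψ a (ψ b c) = ψ (ψ a c) b - ψ a (ψ c b)) (a b c : A) :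
    rstar ψ ψ a b c = 0 := by
  calc rstar ψ ψ a b c
      = (ψ (ψ a c) b - ψ a (ψ c b)) - (ψ (ψ a b) c - ψ a (ψ b c)) := by rw [rstar]; abel
    _ = 0 := by rw [hrs, sub_self]

theorem drsym3_rstar_self (a₀ a₁ a₂ a₃ : A) : drsym3 ψ (rstar ψ ψ) a₀ a₁ a₂ a₃ = 0 := by
  simp only [drsym3, rstar, map_sub, map_add, LinearMap.sub_apply, LinearMap.add_apply]
  abel

end rstar

/-- Formal power series in `t` are modelled as `ℕ → M`; this is multiplication by `t`. -/
def seriesShift {M : Type*} [Zero M] (x : ℕ → M) : ℕ → M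
  | 0 => 0
  | n + 1 => x n

section seriesShift

@[simp] lemma seriesShift_zero {M : Type*} [Zero M] (x : ℕ → M) : seriesShift x 0 = 0 := rfl

@[simp] lemma seriesShift_succ {M : Type*} [Zero M] (x : ℕ → M) (n : ℕ) :
    seriesShift x (n + 1) = x n := rfl

lemma apply_seriesShift {M N : Type*} [Zero M] [Zero N] (f : M → N) (hf : f 0 = 0)
    (x : ℕ → M) (n : ℕ) : f (seriesShift x n) = seriesShift (f ∘ x) n := by
  cases n <;> simp [hf]

variable {M : Type*} [AddCommMonoid M]

lemma eq_single_add_seriesShift (x : ℕ → M) :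
    x = Pi.single 0 (x 0) + seriesShift (fun n => x (n + 1)) := by
  funext n; cases n <;> simp

lemma seriesShift_add (x y : ℕ → M) : seriesShift (x + y) = seriesShift x + seriesShift y := by
  funext n; cases n <;> simp

lemma sum_antidiagonal_seriesShift_snd (f : ℕ → ℕ → M) (n : ℕ) :
    ∑ ij ∈ antidiagonal n, seriesShift (f ij.1) ij.2
      = seriesShift (fun m => ∑ ij ∈ antidiagonal m, f ij.1 ij.2) n := by
  cases n with
  | zero => simp
  | succ n => rw [Nat.sum_antidiagonal_succ']; simp

lemma sum_antidiagonal_seriesShift_fst (f : ℕ → ℕ → M) (n : ℕ) :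
    ∑ ij ∈ antidiagonal n, seriesShift (f · ij.2) ij.1
      = seriesShift (fun m => ∑ ij ∈ antidiagonal m, f ij.1 ij.2) n := by
  cases n with
  | zero => simp
  | succ n => rw [Nat.sum_antidiagonal_succ]; simp

end seriesShift

section seriesMul

variable (ν : ℕ → A →ₗ[K] A →ₗ[K] A)

/-- The product `M_t = Σ tᵖ νₚ`, extended `t`-bilinearly to series. -/
def seriesMul : (ℕ → A) →ₗ[K] (ℕ → A) →ₗ[K] ℕ → A :=
  LinearMap.mk₂ K
    (fun x y n => ∑ pm ∈ antidiagonal n, ∑ qr ∈ antidiagonal pm.2, ν pm.1 (x qr.1) (y qr.2))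
    (fun x x' y => by funext n; simp [sum_add_distrib])
    (fun c x y => by funext n; simp [smul_sum])
    (fun x y y' => by funext n; simp [sum_add_distrib])
    (fun c x y => by funext n; simp [smul_sum])

lemma seriesMul_apply (x y : ℕ → A) (n : ℕ) :
    seriesMul ν x y n
      = ∑ pm ∈ antidiagonal n, ∑ qr ∈ antidiagonal pm.2, ν pm.1 (x qr.1) (y qr.2) :=
  rfl

@[simp] lemma seriesMul_apply_zero (x y : ℕ → A) : seriesMul ν x y 0 = ν 0 (x 0) (y 0) := by
  simp [seriesMul_apply]

lemma seriesMul_seriesShift_left (x y : ℕ → A) :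
    seriesMul ν (seriesShift x) y = seriesShift (seriesMul ν x y) := by
  funext n
  have inner (p m : ℕ) : ∑ qr ∈ antidiagonal m, ν p (seriesShift x qr.1) (y qr.2)
      = seriesShift (fun m => ∑ qr ∈ antidiagonal m, ν p (x qr.1) (y qr.2)) m := by
    refine (sum_congr rfl fun qr _ => ?_).trans
      (sum_antidiagonal_seriesShift_fst (fun q r => ν p (x q) (y r)) m)
    exact apply_seriesShift (ν p · (y qr.2)) (by simp) x qr.1
  simp only [seriesMul_apply, inner]
  exact sum_antidiagonal_seriesShift_snd
    (fun p m => ∑ qr ∈ antidiagonal m, ν p (x qr.1) (y qr.2)) n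

lemma seriesMul_seriesShift_right (x y : ℕ → A) :
    seriesMul ν x (seriesShift y) = seriesShift (seriesMul ν x y) := by
  funext n
  have inner (p m : ℕ) : ∑ qr ∈ antidiagonal m, ν p (x qr.1) (seriesShift y qr.2)
      = seriesShift (fun m => ∑ qr ∈ antidiagonal m, ν p (x qr.1) (y qr.2)) m := by
    refine (sum_congr rfl fun qr _ => ?_).trans
      (sum_antidiagonal_seriesShift_snd (fun q r => ν p (x q) (y r)) m)
    exact apply_seriesShift (ν p (x qr.1)) (by simp) y qr.2
  simp only [seriesMul_apply, inner]
  exact sum_antidiagonal_seriesShift_snd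
    (fun p m => ∑ qr ∈ antidiagonal m, ν p (x qr.1) (y qr.2)) n

lemma seriesMul_single_left (a : A) (y : ℕ → A) (n : ℕ) :
    seriesMul ν (Pi.single 0 a) y n = ∑ pr ∈ antidiagonal n, ν pr.1 a (y pr.2) := by
  rw [seriesMul_apply]
  refine sum_congr rfl fun pm _ => ?_
  rw [sum_eq_single_of_mem ((0, pm.2) : ℕ × ℕ) (by simp)]
  · simp
  · rintro ⟨q, r⟩ hqr hne
    obtain rfl | hq := eq_or_ne q 0
    · simp_all
    · simp [hq]

lemma seriesMul_single_right (x : ℕ → A) (b : A) (n : ℕ) :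
    seriesMul ν x (Pi.single 0 b) n = ∑ pq ∈ antidiagonal n, ν pq.1 (x pq.2) b := by
  rw [seriesMul_apply]
  refine sum_congr rfl fun pm _ => ?_
  rw [sum_eq_single_of_mem ((pm.2, 0) : ℕ × ℕ) (by simp)]
  · simp
  · rintro ⟨q, r⟩ hqr hne
    obtain rfl | hr := eq_or_ne r 0
    · simp_all
    · simp [hr]

lemma seriesMul_single_single (a b : A) :
    seriesMul ν (Pi.single 0 a) (Pi.single 0 b) = fun n => ν n a b := by
  funext n
  rw [seriesMul_single_left, sum_eq_single_of_mem ((n, 0) : ℕ × ℕ) (by simp)]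
  · simp
  · rintro ⟨p, r⟩ hpr hne
    obtain rfl | hr := eq_or_ne r 0
    · simp_all
    · simp [hr]

lemma seriesMul_apply_of_forall_lt_right {k : ℕ} (x : ℕ → A) {y : ℕ → A}
    (hy : ∀ r < k, y r = 0) : seriesMul ν x y k = ν 0 (x 0) (y k) := by
  rw [seriesMul_apply, sum_eq_single_of_mem ((0, k) : ℕ × ℕ) (by simp),
    sum_eq_single_of_mem ((0, k) : ℕ × ℕ) (by simp)]
  · rintro ⟨q, r⟩ hqr hne
    have hr : r < k := by
      simp only [HasAntidiagonal.mem_antidiagonal, ne_eq, Prod.mk.injEq] at hqr hne; omega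
    rw [hy r hr, map_zero]
  · rintro ⟨p, m⟩ hpm hne
    refine sum_eq_zero fun ⟨q, r⟩ hqr => ?_
    have hr : r < k := by
      simp only [HasAntidiagonal.mem_antidiagonal, ne_eq, Prod.mk.injEq] at hpm hqr hne; omega
    rw [hy r hr, map_zero]

lemma seriesMul_apply_of_forall_lt_left {k : ℕ} {x : ℕ → A} (y : ℕ → A)
    (hx : ∀ q < k, x q = 0) : seriesMul ν x y k = ν 0 (x k) (y 0) := by
  rw [seriesMul_apply, sum_eq_single_of_mem ((0, k) : ℕ × ℕ) (by simp),
    sum_eq_single_of_mem ((k, 0) : ℕ × ℕ) (by simp)]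
  · rintro ⟨q, r⟩ hqr hne
    have hq : q < k := by
      simp only [HasAntidiagonal.mem_antidiagonal, ne_eq, Prod.mk.injEq] at hqr hne; omega
    rw [hx q hq, map_zero, LinearMap.zero_apply]
  · rintro ⟨p, m⟩ hpm hne
    refine sum_eq_zero fun ⟨q, r⟩ hqr => ?_
    have hq : q < k := by
      simp only [HasAntidiagonal.mem_antidiagonal, ne_eq, Prod.mk.injEq] at hpm hqr hne; omega
    rw [hx q hq, map_zero, LinearMap.zero_apply]

end seriesMul

/-- The `tᵐ`-coefficient of `M_t ⋆ M_t`. -/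
def rstarCoeff (ν : ℕ → A →ₗ[K] A →ₗ[K] A) (m : ℕ) (a b c : A) : A :=
  ∑ ij ∈ antidiagonal m, rstar (ν ij.1) (ν ij.2) a b c

section rstarSeriesMul

variable (ν : ℕ → A →ₗ[K] A →ₗ[K] A)

local notation "M" => seriesMul ν

lemma rstar_seriesMul_single (a b c : A) (n : ℕ) :
    rstar M M (Pi.single 0 a) (Pi.single 0 b) (Pi.single 0 c) n = rstarCoeff ν n a b c := by
  simp only [rstar, seriesMul_single_single, Pi.add_apply, Pi.sub_apply, seriesMul_single_left,
    seriesMul_single_right, rstarCoeff, sum_add_distrib, sum_sub_distrib]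

lemma rstar_seriesMul_eq_left (x y z : ℕ → A) :
    rstar M M x y z
      = rstar M M (Pi.single 0 (x 0)) y z + seriesShift (rstar M M (fun n => x (n + 1)) y z) := by
  conv_lhs => rw [eq_single_add_seriesShift x]
  rw [rstar_add_left]
  congr 1
  funext n
  cases n <;> simp [rstar, seriesMul_seriesShift_left]

lemma rstar_seriesMul_eq_mid (x y z : ℕ → A) :
    rstar M M x y z
      = rstar M M x (Pi.single 0 (y 0)) z + seriesShift (rstar M M x (fun n => y (n + 1)) z) := by
  conv_lhs => rw [eq_single_add_seriesShift y]
  rw [rstar_add_mid]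
  congr 1
  funext n
  cases n <;> simp [rstar, seriesMul_seriesShift_left, seriesMul_seriesShift_right]

lemma rstar_seriesMul_eq_right (x y z : ℕ → A) :
    rstar M M x y z
      = rstar M M x y (Pi.single 0 (z 0)) + seriesShift (rstar M M x y (fun n => z (n + 1))) := by
  conv_lhs => rw [eq_single_add_seriesShift z]
  rw [rstar_add_right]
  congr 1
  funext n
  cases n <;> simp [rstar, seriesMul_seriesShift_left, seriesMul_seriesShift_right]

lemma rstar_seriesMul_eq (x y z : ℕ → A) :
    rstar M M x y z = (fun n => rstarCoeff ν n (x 0) (y 0) (z 0))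
      + seriesShift (rstar M M (fun n => x (n + 1)) y z
        + rstar M M (Pi.single 0 (x 0)) (fun n => y (n + 1)) z
        + rstar M M (Pi.single 0 (x 0)) (Pi.single 0 (y 0)) (fun n => z (n + 1))) := by
  rw [rstar_seriesMul_eq_left ν x, rstar_seriesMul_eq_mid ν _ y z,
    rstar_seriesMul_eq_right ν _ _ z, seriesShift_add, seriesShift_add]
  funext n
  simp only [Pi.add_apply, rstar_seriesMul_single]
  abel

theorem rstar_seriesMul_apply_of_le {k : ℕ} (hC : ∀ m < k, ∀ a b c, rstarCoeff ν m a b c = 0)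
    {n : ℕ} (hn : n ≤ k) (x y z : ℕ → A) :
    rstar M M x y z n = rstarCoeff ν n (x 0) (y 0) (z 0) := by
  induction n generalizing x y z with
  | zero => simp [rstar_seriesMul_eq ν x y z]
  | succ n ih =>
    have hvanish (x y z : ℕ → A) : rstar M M x y z n = 0 :=
      (ih (by omega) x y z).trans (hC n (by omega) _ _ _)
    simp [rstar_seriesMul_eq ν x y z, hvanish]

theorem drsym3_rstarCoeff_eq_zero {k : ℕ}
    (hC : ∀ m < k, ∀ a b c, rstarCoeff ν m a b c = 0) (a₀ a₁ a₂ a₃ : A) :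
    drsym3 (ν 0) (rstarCoeff ν k) a₀ a₁ a₂ a₃ = 0 := by
  have hlow (x y z : ℕ → A) : ∀ r < k, rstar M M x y z r = 0 := fun r hr =>
    (rstar_seriesMul_apply_of_le ν hC hr.le x y z).trans (hC r hr _ _ _)
  have htop (x y z : ℕ → A) : rstar M M x y z k = rstarCoeff ν k (x 0) (y 0) (z 0) :=
    rstar_seriesMul_apply_of_le ν hC le_rfl x y z
  have := congrFun (drsym3_rstar_self M (Pi.single 0 a₀) (Pi.single 0 a₁) (Pi.single 0 a₂)
    (Pi.single 0 a₃)) k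
  simp only [drsym3, Pi.add_apply, Pi.sub_apply, Pi.zero_apply,
    seriesMul_apply_of_forall_lt_right ν _ (hlow _ _ _),
    seriesMul_apply_of_forall_lt_left ν _ (hlow _ _ _), htop, seriesMul_apply_zero,
    Pi.single_eq_same] at this
  exact this

end rstarSeriesMul

lemma rstarCoeff_zero (ν : ℕ → A →ₗ[K] A →ₗ[K] A) (a b c : A) :
    rstarCoeff ν 0 a b c = rstar (ν 0) (ν 0) a b c := by
  simp [rstarCoeff]

lemma rstarCoeff_of_pos (ν : ℕ → A →ₗ[K] A →ₗ[K] A) {m : ℕ} (hm : 0 < m) (a b c : A) :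
    rstarCoeff ν m a b c = drsym2 (ν 0) (fun x y => ν m x y) a b c
      + ∑ l ∈ Ico 1 m, rstar (ν l) (ν (m - l)) a b c := by
  rw [rstarCoeff, Nat.sum_antidiagonal_eq_sum_range_succ (fun i j => rstar (ν i) (ν j) a b c),
    range_eq_Ico, sum_eq_sum_Ico_succ_bot (by omega), sum_Ico_succ_top (by omega),
    ← rstar_add_rstar_eq_drsym2, Nat.sub_zero, Nat.sub_self]
  abel

def truncatedDeformation (mul : A →ₗ[K] A →ₗ[K] A) (μ : ℕ → A →ₗ[K] A →ₗ[K] A) (k : ℕ) :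
    ℕ → A →ₗ[K] A →ₗ[K] A :=
  fun l => if l = 0 then mul else if l < k then μ l else 0

section truncatedDeformation

variable (mul : A →ₗ[K] A →ₗ[K] A) (μ : ℕ → A →ₗ[K] A →ₗ[K] A) (k : ℕ)

@[simp] lemma truncatedDeformation_zero : truncatedDeformation mul μ k 0 = mul := rfl

lemma truncatedDeformation_of_pos_of_lt {l : ℕ} (h0 : 0 < l) (hl : l < k) :
    truncatedDeformation mul μ k l = μ l := by
  simp [truncatedDeformation, h0.ne', hl]

lemma truncatedDeformation_of_pos_of_le {l : ℕ} (h0 : 0 < l) (hl : k ≤ l) :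
    truncatedDeformation mul μ k l = 0 := by
  simp [truncatedDeformation, h0.ne', hl.not_gt]

lemma sum_Ico_rstar_truncatedDeformation {m : ℕ} (hm : m ≤ k) (a b c : A) :
    ∑ l ∈ Ico 1 m,
        rstar (truncatedDeformation mul μ k l) (truncatedDeformation mul μ k (m - l)) a b c
      = ∑ l ∈ Ico 1 m, rstar (μ l) (μ (m - l)) a b c := by
  refine sum_congr rfl fun l hl => ?_
  rw [mem_Ico] at hl
  rw [truncatedDeformation_of_pos_of_lt mul μ k (by omega) (by omega),
    truncatedDeformation_of_pos_of_lt mul μ k (by omega) (by omega)]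

lemma rstarCoeff_truncatedDeformation_of_lt
    (hrs : ∀ a b c : A,
      mul (mul a b) c - mul a (mul b c) = mul (mul a c) b - mul a (mul c b))
    (h1 : ∀ a b c : A, drsym2 mul (fun x y => μ 1 x y) a b c = 0)
    (hl : ∀ l, 2 ≤ l → l ≤ k - 1 → ∀ a b c : A,
      ∑ i ∈ Ico 1 l, rstar (μ i) (μ (l - i)) a b c = - drsym2 mul (fun x y => μ l x y) a b c)
    {m : ℕ} (hm : m < k) (a b c : A) :
    rstarCoeff (truncatedDeformation mul μ k) m a b c = 0 := by
  rcases Nat.lt_trichotomy m 1 with h | rfl | h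
  · obtain rfl : m = 0 := by omega
    rw [rstarCoeff_zero, truncatedDeformation_zero, rstar_self_eq_zero mul hrs]
  · rw [rstarCoeff_of_pos _ one_pos, truncatedDeformation_of_pos_of_lt mul μ k one_pos hm]
    simp [h1]
  · rw [rstarCoeff_of_pos _ (by omega), truncatedDeformation_of_pos_of_lt mul μ k (by omega) hm,
      truncatedDeformation_zero, sum_Ico_rstar_truncatedDeformation mul μ k hm.le,
      hl m h (by omega), add_neg_cancel]

lemma rstarCoeff_truncatedDeformation_self
    (hrs : ∀ a b c : A,
      mul (mul a b) c - mul a (mul b c) = mul (mul a c) b - mul a (mul c b)) (a b c : A) :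
    rstarCoeff (truncatedDeformation mul μ k) k a b c
      = ∑ l ∈ Ico 1 k, rstar (μ l) (μ (k - l)) a b c := by
  rcases k.eq_zero_or_pos with rfl | hk
  · simp [rstarCoeff_zero, rstar_self_eq_zero mul hrs]
  · rw [rstarCoeff_of_pos _ hk, truncatedDeformation_of_pos_of_le mul μ k hk le_rfl,
      sum_Ico_rstar_truncatedDeformation mul μ k le_rfl]
    simp [drsym2]

end truncatedDeformation

theorem obstruction_is_cocycle_general
    (mul : A →ₗ[K] A →ₗ[K] A)
    (hrs : ∀ a b c : A,
      mul (mul a b) c - mul a (mul b c) = mul (mul a c) b - mul a (mul c b))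
    (k : ℕ)
    (μ : ℕ → A →ₗ[K] A →ₗ[K] A)
    (h1 : ∀ a b c : A, drsym2 mul (fun x y => μ 1 x y) a b c = 0)
    (hl : ∀ l, 2 ≤ l → l ≤ k - 1 →
      ∀ a b c : A,
        ∑ i ∈ Finset.Ico 1 l, rstar (μ i) (μ (l - i)) a b c
          = - drsym2 mul (fun x y => μ l x y) a b c) :
    ∀ a₀ a₁ a₂ a₃ : A,
      drsym3 mul
        (fun x y z => ∑ l ∈ Finset.Ico 1 k, rstar (μ l) (μ (k - l)) x y z)
        a₀ a₁ a₂ a₃ = 0 := by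
  intro a₀ a₁ a₂ a₃
  have hobs : (fun x y z => ∑ l ∈ Ico 1 k, rstar (μ l) (μ (k - l)) x y z)
      = rstarCoeff (truncatedDeformation mul μ k) k := by
    funext x y z
    exact (rstarCoeff_truncatedDeformation_self mul μ k hrs x y z).symm
  rw [hobs, ← truncatedDeformation_zero mul μ k]
  exact drsym3_rstarCoeff_eq_zero _
    (fun m hm => rstarCoeff_truncatedDeformation_of_lt mul μ k hrs h1 hl hm) a₀ a₁ a₂ a₃

/-- If `μ₁,…,μ_{k−1}` satisfy the deformation equations of a right-symmetric
algebra `(A, mul)`, then the obstruction `Obs_k = Σ_{l=1}^{k−1} μ_l ⋆ μ_{k−l}`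
is a right-symmetric 3-cocycle: `d_rsym(Obs_k) = 0`. -/
theorem obstruction_is_cocycle
    (mul : A →ₗ[K] A →ₗ[K] A)
    (hrs : ∀ a b c : A,
      mul (mul a b) c - mul a (mul b c) = mul (mul a c) b - mul a (mul c b))
    (k : ℕ) (hk : 2 ≤ k)
    (μ : ℕ → A →ₗ[K] A →ₗ[K] A)
    (h1 : ∀ a b c : A, drsym2 mul (fun x y => μ 1 x y) a b c = 0)
    (hl : ∀ l, 2 ≤ l → l ≤ k - 1 →
      ∀ a b c : A,
        ∑ i ∈ Finset.Ico 1 l, rstar (μ i) (μ (l - i)) a b c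
          = - drsym2 mul (fun x y => μ l x y) a b c) :
    ∀ a₀ a₁ a₂ a₃ : A,
      drsym3 mul
        (fun x y z => ∑ l ∈ Finset.Ico 1 k, rstar (μ l) (μ (k - l)) x y z)
        a₀ a₁ a₂ a₃ = 0 :=
  obstruction_is_cocycle_general mul hrs k μ h1 hl
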